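/- arXiv:1008.3739 — 5 statements merged into one kernel-verified Lean document; each statement's English description precedes it below -/
import Mathlib

section
/- Let A be an algebra admitting a multiplicative decomposition A = BC (i.e., B, C are subalgebras and multiplication induces a linear isomorphism B ⊗ C → A), and let A' ⊆ A be a subalgebra with multiplicative decomposition A' = BC' where C' ⊆ C is a subalgebra. Then for any right A'-module M, the natural map M ⊗_{C'} C → M ⊗_{A'} A induced by the inclusion C ⊆ A (sending m ⊗ c to m ⊗ c) is an isomorphism of right C-modules. -/
set_option synthInstance.maxHeartbeats 1000000
set_option maxHeartbeats 1000000
set_option maxSynthPendingDepth 5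

open TensorProduct

/-- The right action of a subalgebra `A'` on a right `A'`-module, as a `k`-bilinear map. -/
def rsmulAux {k : Type*} [Field k] {A : Type*} [Ring A] [Algebra k A]
    (A' : Subalgebra k A) (M : Type*) [AddCommGroup M] [Module k M]
    [Module (↥A')ᵐᵒᵖ M] [IsScalarTower k (↥A')ᵐᵒᵖ M] : ↥A' →ₗ[k] M →ₗ[k] M where
  toFun a' :=
    { toFun := fun m => MulOpposite.op a' • m
      map_add' := fun x y => smul_add _ x y
      map_smul' := fun r m => (smul_comm r (MulOpposite.op a') m).symm }
  map_add' a b := by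
    ext m
    simp [MulOpposite.op_add, add_smul]
  map_smul' r a := by
    ext m
    simp [MulOpposite.op_smul, smul_assoc]

/-- Multiplicative decomposition lemma: let `A = BC` be a multiplicative decomposition of a
`k`-algebra `A` (i.e. `B, C` are subalgebras and multiplication induces a linear isomorphism
`B ⊗ C ≅ A`), and let `A' ⊆ A` be a subalgebra with multiplicative decomposition `A' = BC'`,
where `C' ⊆ C` is a subalgebra.  Then for any right `A'`-module `M` the natural map
`M ⊗_{C'} C → M ⊗_{A'} A` induced by the inclusion `C ⊆ A` is an isomorphism of right
`C`-modules.  The relative tensor products are realized as quotients of `M ⊗_k C` and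
`M ⊗_k A` by the usual balancing relations, and the right `C`-module structures are induced by
right multiplication on the second factor. -/
theorem multiplicative_decomposition_tensor_iso
    {k : Type*} [Field k] {A : Type*} [Ring A] [Algebra k A]
    (B C A' C' : Subalgebra k A)
    (hC'C : C' ≤ C) (hC'A' : C' ≤ A')
    -- `A = BC` : multiplication `B ⊗ C → A` is bijective
    (hBC : Function.Bijective
      ⇑(TensorProduct.lift (((LinearMap.mul k A).comp B.val.toLinearMap).compl₂
          C.val.toLinearMap)))
    -- `A' = BC'` : multiplication `B ⊗ C' → A` is injective with range `A'`
    (hBC'inj : Function.Injective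
      ⇑(TensorProduct.lift (((LinearMap.mul k A).comp B.val.toLinearMap).compl₂
          C'.val.toLinearMap)))
    (hBC'range : LinearMap.range
        (TensorProduct.lift (((LinearMap.mul k A).comp B.val.toLinearMap).compl₂
          C'.val.toLinearMap)) = Subalgebra.toSubmodule A')
    -- `M` a right `A'`-module
    (M : Type*) [AddCommGroup M] [Module k M] [Module (↥A')ᵐᵒᵖ M]
    [IsScalarTower k (↥A')ᵐᵒᵖ M]
    -- the balancing relations defining `M ⊗_{C'} C` inside `M ⊗_k C`
    (R₁ : Submodule k (M ⊗[k] ↥C))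
    (hR₁ : R₁ = Submodule.span k {x | ∃ (m : M) (c' : A) (hc' : c' ∈ C') (c : ↥C),
      x = (MulOpposite.op (⟨c', hC'A' hc'⟩ : ↥A') • m) ⊗ₜ c - m ⊗ₜ ((⟨c', hC'C hc'⟩ : ↥C) * c)})
    -- the balancing relations defining `M ⊗_{A'} A` inside `M ⊗_k A`
    (R₂ : Submodule k (M ⊗[k] A))
    (hR₂ : R₂ = Submodule.span k {x | ∃ (m : M) (a' : ↥A') (a : A),
      x = (MulOpposite.op a' • m) ⊗ₜ a - m ⊗ₜ ((a' : A) * a)})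
    -- the natural map `M ⊗_k C → M ⊗_k A` maps the relations into the relations
    (hcomp : R₁ ≤ R₂.comap (LinearMap.lTensor M C.val.toLinearMap)) :
    -- the induced map `M ⊗_{C'} C → M ⊗_{A'} A` is bijective, i.e. an isomorphism, …
    Function.Bijective ⇑(Submodule.mapQ R₁ R₂ (LinearMap.lTensor M C.val.toLinearMap) hcomp) ∧
    -- … and it is right `C`-linear: it intertwines right multiplication by any `c₀ ∈ C`
    ∀ (c₀ : ↥C) (hr₁ : R₁ ≤ R₁.comap (LinearMap.lTensor M (LinearMap.mulRight k c₀)))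
      (hr₂ : R₂ ≤ R₂.comap (LinearMap.lTensor M (LinearMap.mulRight k (c₀ : A)))),
      (Submodule.mapQ R₁ R₂ (LinearMap.lTensor M C.val.toLinearMap) hcomp) ∘ₗ
          (Submodule.mapQ R₁ R₁ (LinearMap.lTensor M (LinearMap.mulRight k c₀)) hr₁)
        = (Submodule.mapQ R₂ R₂ (LinearMap.lTensor M (LinearMap.mulRight k (c₀ : A))) hr₂) ∘ₗ
          (Submodule.mapQ R₁ R₂ (LinearMap.lTensor M C.val.toLinearMap) hcomp) := by
  classical
  set mult : ↥B ⊗[k] ↥C →ₗ[k] A :=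
    TensorProduct.lift (((LinearMap.mul k A).comp B.val.toLinearMap).compl₂ C.val.toLinearMap)
    with hmult_def
  set mult' : ↥B ⊗[k] ↥C' →ₗ[k] A :=
    TensorProduct.lift (((LinearMap.mul k A).comp B.val.toLinearMap).compl₂ C'.val.toLinearMap)
    with hmult'_def
  have hmult : ∀ (b : ↥B) (c : ↥C), mult (b ⊗ₜ c) = (b : A) * c := by
    intro b c; simp [hmult_def]
  have hmult' : ∀ (b : ↥B) (c' : ↥C'), mult' (b ⊗ₜ c') = (b : A) * c' := by
    intro b c; simp [hmult'_def]
  -- `B ⊆ A'`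
  have hBA' : B ≤ A' := by
    intro b hb
    have h1 : b ∈ LinearMap.range mult' := ⟨(⟨b, hb⟩ : ↥B) ⊗ₜ (1 : ↥C'), by
      rw [hmult']; simp⟩
    rw [hBC'range] at h1
    exact h1
  -- the inverse of the multiplication isomorphism `B ⊗ C ≅ A`
  set μ : ↥B ⊗[k] ↥C ≃ₗ[k] A := LinearEquiv.ofBijective mult hBC with hμ_def
  have hμ : ∀ (b : ↥B) (c : ↥C), μ.symm ((b : A) * c) = b ⊗ₜ c := by
    intro b c
    rw [LinearEquiv.symm_apply_eq, hμ_def, LinearEquiv.ofBijective_apply, hmult]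
  set s : ↥A' →ₗ[k] M →ₗ[k] M := rsmulAux A' M with hs_def
  set f : M ⊗[k] ↥B →ₗ[k] M :=
    TensorProduct.lift ((s ∘ₗ (Subalgebra.inclusion hBA').toLinearMap).flip) with hf_def
  have hf : ∀ (m : M) (b : ↥B),
      f (m ⊗ₜ b) = MulOpposite.op (Subalgebra.inclusion hBA' b) • m := by
    intro m b
    simp [hf_def, hs_def, rsmulAux]
  -- the candidate inverse, defined on `M ⊗ A`
  set ν : M ⊗[k] A →ₗ[k] (M ⊗[k] ↥C) ⧸ R₁ :=
    R₁.mkQ ∘ₗ f.rTensor ↥C ∘ₗ (TensorProduct.assoc k M ↥B ↥C).symm.toLinearMap ∘ₗ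
      LinearMap.lTensor M μ.symm.toLinearMap with hν_def
  have hν : ∀ (m : M) (b : ↥B) (c : ↥C),
      ν (m ⊗ₜ ((b : A) * c)) =
        R₁.mkQ ((MulOpposite.op (Subalgebra.inclusion hBA' b) • m) ⊗ₜ c) := by
    intro m b c
    rw [hν_def]
    simp only [LinearMap.comp_apply, LinearMap.lTensor_tmul, LinearEquiv.coe_toLinearMap]
    rw [hμ, TensorProduct.assoc_symm_tmul]
    simp only [LinearMap.rTensor_tmul]
    rw [hf]
  -- generators of `R₁` and `R₂`
  have hgen₁ : ∀ (m : M) (c' : ↥C') (c : ↥C),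
      (MulOpposite.op (Subalgebra.inclusion hC'A' c') • m) ⊗ₜ c
        - m ⊗ₜ ((Subalgebra.inclusion hC'C c') * c) ∈ R₁ := by
    intro m c' c
    rw [hR₁]
    exact Submodule.subset_span ⟨m, c'.1, c'.2, c, rfl⟩
  have hgen₂ : ∀ (m : M) (a' : ↥A') (a : A),
      (MulOpposite.op a' • m) ⊗ₜ a - m ⊗ₜ ((a' : A) * a) ∈ R₂ := by
    intro m a' a
    rw [hR₂]
    exact Submodule.subset_span ⟨m, a', a, rfl⟩
  -- the multiplication map `B ⊗ C' → A'`, with values in `A'`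
  set multA' : ↥B ⊗[k] ↥C' →ₗ[k] ↥A' :=
    TensorProduct.lift (((LinearMap.mul k ↥A').comp
      (Subalgebra.inclusion hBA').toLinearMap).compl₂ (Subalgebra.inclusion hC'A').toLinearMap)
    with hmultA'_def
  have hmultA' : ∀ (b : ↥B) (c' : ↥C'),
      multA' (b ⊗ₜ c') = Subalgebra.inclusion hBA' b * Subalgebra.inclusion hC'A' c' := by
    intro b c'; simp [hmultA'_def]
  have hcompat : ∀ t : ↥B ⊗[k] ↥C', (multA' t : A) = mult' t := by
    have h : A'.val.toLinearMap ∘ₗ multA' = mult' := by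
      apply TensorProduct.ext'
      intro b c'
      simp only [LinearMap.comp_apply, hmultA', hmult']
      simp
    intro t
    have := LinearMap.congr_fun h t
    simpa using this
  -- the key computation : `ν (m ⊗ (a' * c)) = [(op a' • m) ⊗ c]`
  have star : ∀ (a' : ↥A') (m : M) (c : ↥C),
      ν (m ⊗ₜ ((a' : A) * c)) = R₁.mkQ ((MulOpposite.op a' • m) ⊗ₜ c) := by
    have key : ∀ (u : ↥B ⊗[k] ↥C') (m : M) (c : ↥C),
        ν (m ⊗ₜ (mult' u * c)) = R₁.mkQ ((MulOpposite.op (multA' u) • m) ⊗ₜ c) := by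
      intro u m c
      induction u using TensorProduct.induction_on with
      | zero => simp
      | add x y hx hy =>
          simp only [map_add, add_mul, TensorProduct.tmul_add, MulOpposite.op_add, add_smul,
            TensorProduct.add_tmul, hx, hy]
      | tmul b' c' =>
          rw [hmult', hmultA']
          have h1 : ((b' : A) * c') * c
              = (b' : A) * ((Subalgebra.inclusion hC'C c' * c : ↥C) : A) := by
            simp [mul_assoc]
          rw [h1, hν]
          rw [MulOpposite.op_mul, mul_smul]
          rw [eq_comm, Submodule.mkQ_apply, Submodule.mkQ_apply, Submodule.Quotient.eq]
          exact hgen₁ (MulOpposite.op (Subalgebra.inclusion hBA' b') • m) c' c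
    intro a' m c
    have hmem : (a' : A) ∈ LinearMap.range mult' := by rw [hBC'range]; exact a'.2
    obtain ⟨t, ht⟩ := hmem
    have ht' : multA' t = a' := Subtype.ext (by rw [hcompat, ht])
    rw [← ht, ← ht']
    exact key t m c
  -- `ν` kills the relations `R₂`
  have hkey2 : ∀ (a' : ↥A') (m : M) (a : A),
      ν ((MulOpposite.op a' • m) ⊗ₜ a) = ν (m ⊗ₜ ((a' : A) * a)) := by
    intro a' m a
    obtain ⟨u, rfl⟩ := hBC.2 a
    induction u using TensorProduct.induction_on with
    | zero => simp
    | add x y hx hy =>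
        simp only [map_add, mul_add, TensorProduct.tmul_add, hx, hy]
    | tmul b c =>
        rw [hmult, hν]
        have h1 : (a' : A) * ((b : A) * c)
            = ((a' * Subalgebra.inclusion hBA' b : ↥A') : A) * c := by
          simp [mul_assoc]
        rw [h1, star]
        rw [MulOpposite.op_mul, mul_smul]
  have hker : R₂ ≤ LinearMap.ker ν := by
    rw [hR₂, Submodule.span_le]
    rintro x ⟨m, a', a, rfl⟩
    simp only [SetLike.mem_coe, LinearMap.mem_ker, map_sub, hkey2 a' m a, sub_self]
  set νb : (M ⊗[k] A) ⧸ R₂ →ₗ[k] (M ⊗[k] ↥C) ⧸ R₁ := R₂.liftQ ν hker with hνb_def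
  set φ := Submodule.mapQ R₁ R₂ (LinearMap.lTensor M C.val.toLinearMap) hcomp with hφ_def
  have left : νb ∘ₗ φ = LinearMap.id := by
    apply Submodule.linearMap_qext
    apply TensorProduct.ext'
    intro m c
    simp only [LinearMap.comp_apply, Submodule.mkQ_apply, hφ_def, Submodule.mapQ_apply,
      hνb_def, Submodule.liftQ_apply, LinearMap.lTensor_tmul, LinearMap.id_apply,
      AlgHom.toLinearMap_apply, Subalgebra.coe_val]
    have h1 : (c : A) = ((1 : ↥B) : A) * (c : A) := by simp
    rw [h1, hν]
    simp
  have right : φ ∘ₗ νb = LinearMap.id := by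
    apply Submodule.linearMap_qext
    apply TensorProduct.ext'
    intro m a
    simp only [LinearMap.comp_apply, Submodule.mkQ_apply, hνb_def, Submodule.liftQ_apply,
      LinearMap.id_apply]
    obtain ⟨u, rfl⟩ := hBC.2 a
    induction u using TensorProduct.induction_on with
    | zero => simp
    | add x y hx hy =>
        simp only [map_add, TensorProduct.tmul_add, hx, hy, Submodule.Quotient.mk_add]
    | tmul b c =>
        rw [hmult, hν, Submodule.mkQ_apply, Submodule.mapQ_apply]
        simp only [LinearMap.lTensor_tmul, AlgHom.toLinearMap_apply, Subalgebra.coe_val]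
        rw [Submodule.Quotient.eq]
        have := hgen₂ m (Subalgebra.inclusion hBA' b) (c : A)
        simpa using this
  constructor
  · exact Function.bijective_iff_has_inverse.mpr ⟨νb,
      fun x => by rw [← LinearMap.comp_apply, left, LinearMap.id_apply],
      fun x => by rw [← LinearMap.comp_apply, right, LinearMap.id_apply]⟩
  · intro c₀ hr₁ hr₂
    apply Submodule.linearMap_qext
    apply TensorProduct.ext'
    intro m c
    simp only [LinearMap.comp_apply, Submodule.mkQ_apply, hφ_def, Submodule.mapQ_apply,
      LinearMap.lTensor_tmul, LinearMap.mulRight_apply, AlgHom.toLinearMap_apply,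
      Subalgebra.coe_val]
    simp [MulMemClass.coe_mul]
end

section
/- If A_n = A^{⊗n} C_n is a multiplicative decomposition for each n (with A a fixed algebra), then for an A_m-module M and an A_n-module N, there is a multiplicative decomposition A_m ⊗ A_n = A^{⊗(m+n)}(C_m ⊗ C_n), and the natural morphism (M ⊗ N) ⊗_{C_m ⊗ C_n} C_{m+n} → (M ⊗ N) ⊗_{A_m ⊗ A_n} A_{m+n} is an isomorphism. -/
open TensorProduct

/-!
(a) The multiplication map `(A^{⊗m} ⊗ A^{⊗n}) ⊗ (C_m ⊗ C_n) → A_m ⊗ A_n` is, up to the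
interchange of the middle factors, the tensor product of the two multiplication isomorphisms
`A^{⊗m} ⊗ C_m ≅ A_m` and `A^{⊗n} ⊗ C_n ≅ A_n`.

(b) Put `X = M ⊗ N`, `B = A_m ⊗ A_n`, `P = A^{⊗m} ⊗ A^{⊗n}` and `D = C_m ⊗ C_n`. Since
`A_{m+n} ≅ P ⊗ C_{m+n}` via `p ⊗ e ↦ μ(p) e`, the rule `x ⊗ μ(p) e ↦ [x·p ⊗ e]` defines a map
`X ⊗ A_{m+n} → X ⊗_D C_{m+n}`. It respects the `B`-balancing relations because, by (a), every
element of `B` is a sum of products `p·d` with `d ∈ D`, and `d` can be moved across `⊗_D`; the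
induced map is inverse to the natural one.
-/

namespace LinearMap

variable {k A B P Q P' Q' : Type*} [CommSemiring k] [Semiring A] [Algebra k A]
  [Semiring B] [Algebra k B] [AddCommMonoid P] [Module k P] [AddCommMonoid Q] [Module k Q]
  [AddCommMonoid P'] [Module k P'] [AddCommMonoid Q'] [Module k Q']

/-- `A = f(P) g(Q)` is a multiplicative decomposition when this map is bijective. -/
def mulMap (f : P →ₗ[k] A) (g : Q →ₗ[k] A) : P ⊗[k] Q →ₗ[k] A :=
  lift ((LinearMap.mul k A ∘ₗ f).compl₂ g)

@[simp] lemma mulMap_tmul (f : P →ₗ[k] A) (g : Q →ₗ[k] A) (p : P) (q : Q) :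
    mulMap f g (p ⊗ₜ q) = f p * g q := rfl

lemma mulMap_map_map (f : P →ₗ[k] A) (g : Q →ₗ[k] A) (f' : P' →ₗ[k] B) (g' : Q' →ₗ[k] B) :
    mulMap (TensorProduct.map f f') (TensorProduct.map g g') =
      TensorProduct.map (mulMap f g) (mulMap f' g') ∘ₗ
        (tensorTensorTensorComm k P P' Q Q').toLinearMap :=
  ext_fourfold' fun _ _ _ _ => by simp [Algebra.TensorProduct.tmul_mul_tmul]

lemma bijective_mulMap_map_map {f : P →ₗ[k] A} {g : Q →ₗ[k] A} {f' : P' →ₗ[k] B}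
    {g' : Q' →ₗ[k] B} (h : Function.Bijective (mulMap f g))
    (h' : Function.Bijective (mulMap f' g')) :
    Function.Bijective (mulMap (TensorProduct.map f f') (TensorProduct.map g g')) := by
  rw [mulMap_map_map]
  exact (map_bijective h h').comp (tensorTensorTensorComm k P P' Q Q').bijective

end LinearMap

open MulOpposite

section Balancing

variable {k B E X : Type*} [CommRing k] [Semiring B] [Algebra k B] [Semiring E] [Algebra k E]
  [AddCommGroup X] [Module k X]

/-- The quotient of `X ⊗[k] E` by this submodule is `X ⊗_B E`, for `X` a right `B`-module
through `ρ` and `E` a left `B`-module through `μ`. -/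
def balancingSubmodule (ρ : Bᵐᵒᵖ →ₐ[k] Module.End k X) (μ : B →ₐ[k] E) :
    Submodule k (X ⊗[k] E) :=
  Submodule.span k {y | ∃ (x : X) (b : B) (z : E), y = ρ (op b) x ⊗ₜ z - x ⊗ₜ (μ b * z)}

variable (ρ : Bᵐᵒᵖ →ₐ[k] Module.End k X) (μ : B →ₐ[k] E)

lemma balancingSubmodule_eq_span_of_span_eq_top {Sx : Set X} {Sb : Set B}
    (hx : Submodule.span k Sx = ⊤) (hb : Submodule.span k Sb = ⊤) :
    balancingSubmodule ρ μ = Submodule.span k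
      {y | ∃ x ∈ Sx, ∃ b ∈ Sb, ∃ z : E, y = ρ (op b) x ⊗ₜ z - x ⊗ₜ (μ b * z)} := by
  refine le_antisymm (Submodule.span_le.mpr ?_) (Submodule.span_mono ?_)
  · rintro _ ⟨x, b, z, rfl⟩
    let F : X →ₗ[k] B →ₗ[k] X ⊗[k] E := LinearMap.mk₂ k
      (fun x b => ρ (op b) x ⊗ₜ z - x ⊗ₜ (μ b * z))
      (by intros; simp only [map_add, add_tmul]; abel)
      (by intros; simp only [map_smul, smul_tmul', smul_sub])
      (by intros; simp only [op_add, map_add, LinearMap.add_apply, add_mul, add_tmul, tmul_add]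
          abel)
      (by intros; simp only [op_smul, map_smul, LinearMap.smul_apply, smul_mul_assoc, smul_tmul',
        tmul_smul, smul_sub])
    have hF : F x b ∈ Submodule.map₂ F (Submodule.span k Sx) (Submodule.span k Sb) := by
      rw [hx, hb]
      exact Submodule.apply_mem_map₂ F trivial trivial
    rw [Submodule.map₂_span_span] at hF
    refine Submodule.span_mono ?_ hF
    rintro _ ⟨x', hx', b', hb', rfl⟩
    exact ⟨x', hx', b', hb', z, rfl⟩
  · rintro _ ⟨x, -, b, -, z, rfl⟩
    exact ⟨x, b, z, rfl⟩

lemma mkQ_balancingSubmodule_act_tmul (x : X) (b : B) (z : E) :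
    (balancingSubmodule ρ μ).mkQ (ρ (op b) x ⊗ₜ z) =
      (balancingSubmodule ρ μ).mkQ (x ⊗ₜ (μ b * z)) :=
  (Submodule.Quotient.eq _).mpr (Submodule.subset_span ⟨x, b, z, rfl⟩)

variable {D E' P : Type*} [Semiring D] [Algebra k D] [Semiring E'] [Algebra k E']
  [AddCommMonoid P] [Module k P] {ιE : E' →ₐ[k] E} {T : P →ₗ[k] B}

/-- `x ⊗ μ (T p) e ↦ [ρ (T p) x ⊗ e]`, through `E ≅ P ⊗ E'`; it descends to the inverse of the
comparison map `X ⊗_D E' → X ⊗_B E`. -/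
noncomputable def comparisonInv (ιD : D →ₐ[k] B) (μD : D →ₐ[k] E')
    (hE : Function.Bijective (LinearMap.mulMap (μ.toLinearMap ∘ₗ T) ιE.toLinearMap)) :
    X ⊗[k] E →ₗ[k] (X ⊗[k] E') ⧸ balancingSubmodule (ρ.comp (AlgHom.op ιD)) μD :=
  (balancingSubmodule _ _).mkQ ∘ₗ
    LinearMap.rTensor E' (lift (ρ.toLinearMap ∘ₗ (opLinearEquiv k).toLinearMap ∘ₗ T).flip) ∘ₗ
    (TensorProduct.assoc k X P E').symm.toLinearMap ∘ₗ
    (LinearEquiv.lTensor X (LinearEquiv.ofBijective _ hE).symm).toLinearMap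

variable {ρ μ} {ιD : D →ₐ[k] B} {μD : D →ₐ[k] E'}

lemma comparisonInv_tmul_map_apply_mul
    (hE : Function.Bijective (LinearMap.mulMap (μ.toLinearMap ∘ₗ T) ιE.toLinearMap))
    (x : X) (p : P) (e : E') :
    comparisonInv ρ μ ιD μD hE (x ⊗ₜ (μ (T p) * ιE e)) =
      (balancingSubmodule (ρ.comp (AlgHom.op ιD)) μD).mkQ (ρ (op (T p)) x ⊗ₜ e) := by
  have hp : (LinearEquiv.ofBijective _ hE).symm (μ (T p) * ιE e) = p ⊗ₜ e :=
    (LinearEquiv.ofBijective _ hE).symm_apply_apply (p ⊗ₜ e)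
  simp [comparisonInv, hp]

lemma comparisonInv_tmul_map_mul (hsq : μ.comp ιD = ιE.comp μD)
    (hB : Function.Surjective (LinearMap.mulMap T ιD.toLinearMap))
    (hE : Function.Bijective (LinearMap.mulMap (μ.toLinearMap ∘ₗ T) ιE.toLinearMap))
    (x : X) (b : B) (e : E') :
    comparisonInv ρ μ ιD μD hE (x ⊗ₜ (μ b * ιE e)) =
      (balancingSubmodule (ρ.comp (AlgHom.op ιD)) μD).mkQ (ρ (op b) x ⊗ₜ e) := by
  obtain ⟨u, rfl⟩ := hB b
  induction u using TensorProduct.induction_on with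
  | zero => simp
  | tmul p d =>
    have hd : μ (ιD d) = ιE (μD d) := DFunLike.congr_fun hsq d
    calc comparisonInv ρ μ ιD μD hE (x ⊗ₜ (μ (T p * ιD d) * ιE e))
        = comparisonInv ρ μ ιD μD hE (x ⊗ₜ (μ (T p) * ιE (μD d * e))) := by
          rw [map_mul, hd, mul_assoc, ← map_mul]
      _ = (balancingSubmodule (ρ.comp (AlgHom.op ιD)) μD).mkQ (ρ (op (T p)) x ⊗ₜ (μD d * e)) :=
          comparisonInv_tmul_map_apply_mul hE x p _
      _ = (balancingSubmodule (ρ.comp (AlgHom.op ιD)) μD).mkQ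
            (ρ (op (ιD d)) (ρ (op (T p)) x) ⊗ₜ e) :=
          (mkQ_balancingSubmodule_act_tmul (ρ.comp (AlgHom.op ιD)) μD _ d e).symm
      _ = (balancingSubmodule (ρ.comp (AlgHom.op ιD)) μD).mkQ (ρ (op (T p * ιD d)) x ⊗ₜ e) := by
          rw [op_mul, map_mul]; rfl
  | add u v hu hv =>
    simp only [map_add, op_add, LinearMap.add_apply, add_mul, tmul_add, add_tmul, hu, hv]

lemma balancingSubmodule_le_ker_comparisonInv (hsq : μ.comp ιD = ιE.comp μD)
    (hB : Function.Surjective (LinearMap.mulMap T ιD.toLinearMap))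
    (hE : Function.Bijective (LinearMap.mulMap (μ.toLinearMap ∘ₗ T) ιE.toLinearMap)) :
    balancingSubmodule ρ μ ≤ LinearMap.ker (comparisonInv ρ μ ιD μD hE) := by
  refine Submodule.span_le.mpr ?_
  rintro _ ⟨x, b, z, rfl⟩
  rw [SetLike.mem_coe, LinearMap.mem_ker, map_sub, sub_eq_zero]
  obtain ⟨u, rfl⟩ := hE.2 z
  induction u using TensorProduct.induction_on with
  | zero => simp
  | tmul p e =>
    calc comparisonInv ρ μ ιD μD hE (ρ (op b) x ⊗ₜ (μ (T p) * ιE e))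
        = (balancingSubmodule (ρ.comp (AlgHom.op ιD)) μD).mkQ (ρ (op (b * T p)) x ⊗ₜ e) := by
          rw [comparisonInv_tmul_map_apply_mul, op_mul, map_mul]; rfl
      _ = comparisonInv ρ μ ιD μD hE (x ⊗ₜ (μ b * (μ (T p) * ιE e))) := by
          rw [← mul_assoc, ← map_mul, comparisonInv_tmul_map_mul hsq hB]
  | add u v hu hv => simp only [map_add, mul_add, tmul_add, hu, hv]

theorem bijective_mapQ_lTensor_balancingSubmodule (hsq : μ.comp ιD = ιE.comp μD)
    (hB : Function.Surjective (LinearMap.mulMap T ιD.toLinearMap))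
    (hE : Function.Bijective (LinearMap.mulMap (μ.toLinearMap ∘ₗ T) ιE.toLinearMap))
    (h : balancingSubmodule (ρ.comp (AlgHom.op ιD)) μD ≤
      (balancingSubmodule ρ μ).comap (ιE.toLinearMap.lTensor X)) :
    Function.Bijective (Submodule.mapQ _ _ (ιE.toLinearMap.lTensor X) h) := by
  set φ := Submodule.mapQ _ _ (ιE.toLinearMap.lTensor X) h
  set ψ := (balancingSubmodule ρ μ).liftQ _ (balancingSubmodule_le_ker_comparisonInv hsq hB hE)
  have hψφ : ψ ∘ₗ φ = LinearMap.id := Submodule.linearMap_qext _ <| ext' fun x e => by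
    simpa [φ, ψ] using comparisonInv_tmul_map_mul hsq hB hE x 1 e
  have hφψ : φ ∘ₗ ψ = LinearMap.id := by
    refine Submodule.linearMap_qext _ <| (LinearMap.cancel_right
      (LinearEquiv.lTensor X (LinearEquiv.ofBijective _ hE)).surjective).mp ?_
    refine ext_threefold' fun x p e => ?_
    simpa [φ, ψ, comparisonInv_tmul_map_apply_mul] using
      mkQ_balancingSubmodule_act_tmul ρ μ x (T p) (ιE e)
  exact Function.bijective_iff_has_inverse.mpr
    ⟨ψ, LinearMap.congr_fun hψφ, LinearMap.congr_fun hφψ⟩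

end Balancing

noncomputable def rightActionTensorProduct (k A₁ A₂ M N : Type*) [CommSemiring k] [Semiring A₁]
    [Algebra k A₁] [Semiring A₂] [Algebra k A₂] [AddCommMonoid M] [Module k M] [Module A₁ᵐᵒᵖ M]
    [IsScalarTower k A₁ᵐᵒᵖ M] [AddCommMonoid N] [Module k N] [Module A₂ᵐᵒᵖ N]
    [IsScalarTower k A₂ᵐᵒᵖ N] : (A₁ ⊗[k] A₂)ᵐᵒᵖ →ₐ[k] Module.End k (M ⊗[k] N) :=
  Module.endTensorEndAlgHom.comp <|
    (Algebra.TensorProduct.map (Algebra.lsmul k k M) (Algebra.lsmul k k N)).comp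
      (Algebra.TensorProduct.opAlgEquiv k k A₁ A₂).symm.toAlgHom

/-- Let `C_* ⊆ A_*` be an embedding of multiplicative sequences of algebras such that each `Aₙ`
admits a multiplicative decomposition `Aₙ = A^{⊗n}Cₙ` for a fixed algebra `A`.  Then for a
right `A_m`-module `M` and a right `A_n`-module `N` there is a multiplicative decomposition
`A_m ⊗ A_n = A^{⊗(m+n)}(C_m ⊗ C_n)`, and the natural morphism
`(M ⊗ N) ⊗_{C_m ⊗ C_n} C_{m+n} → (M ⊗ N) ⊗_{A_m ⊗ A_n} A_{m+n}` is an isomorphism.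
Here `A_m, A_n, A_{m+n}` are the algebras `Am, An, Amn` with multiplication map `μ`, the
`A^{⊗m}`-parts are the subalgebras `Tm, Tn, Tmn`, and the relative tensor products are
realized as quotients of tensor products over `k` by the balancing relations. -/
theorem multiplicative_sequence_decomposition_tensor_iso
    {k : Type*} [Field k]
    {Am An Amn : Type*} [Ring Am] [Ring An] [Ring Amn]
    [Algebra k Am] [Algebra k An] [Algebra k Amn]
    (μ : Am ⊗[k] An →ₐ[k] Amn)
    (Tm Cm : Subalgebra k Am) (Tn Cn : Subalgebra k An) (Cmn : Subalgebra k Amn)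
    -- the decompositions `A_m = A^{⊗m}C_m` and `A_n = A^{⊗n}C_n`
    (hAm : Function.Bijective
      ⇑(TensorProduct.lift (((LinearMap.mul k Am).comp Tm.val.toLinearMap).compl₂
          Cm.val.toLinearMap)))
    (hAn : Function.Bijective
      ⇑(TensorProduct.lift (((LinearMap.mul k An).comp Tn.val.toLinearMap).compl₂
          Cn.val.toLinearMap)))
    -- the decomposition `A_{m+n} = A^{⊗(m+n)}C_{m+n}`, with
    -- `A^{⊗(m+n)} = A^{⊗m} ⊗ A^{⊗n}` embedded via `μ`
    (hAmn : Function.Bijective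
      ⇑(TensorProduct.lift (((LinearMap.mul k Amn).comp
          (μ.comp (Algebra.TensorProduct.map Tm.val Tn.val)).toLinearMap).compl₂
          Cmn.val.toLinearMap)))
    -- `C_* ⊆ A_*` is an embedding of multiplicative sequences
    (hμC : ∀ (c : ↥Cm) (d : ↥Cn), μ ((c : Am) ⊗ₜ (d : An)) ∈ Cmn)
    -- right modules `M` over `A_m` and `N` over `A_n`
    (M N : Type*) [AddCommGroup M] [Module k M] [Module Amᵐᵒᵖ M] [IsScalarTower k Amᵐᵒᵖ M]
    [AddCommGroup N] [Module k N] [Module Anᵐᵒᵖ N] [IsScalarTower k Anᵐᵒᵖ N]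
    -- balancing relations defining `(M ⊗ N) ⊗_{C_m ⊗ C_n} C_{m+n}`
    (R₁ : Submodule k ((M ⊗[k] N) ⊗[k] ↥Cmn))
    (hR₁ : R₁ = Submodule.span k {x | ∃ (m : M) (n : N) (c : ↥Cm) (d : ↥Cn) (z : ↥Cmn),
      x = ((MulOpposite.op (c : Am) • m) ⊗ₜ (MulOpposite.op (d : An) • n)) ⊗ₜ z
        - (m ⊗ₜ n) ⊗ₜ ((⟨μ ((c : Am) ⊗ₜ (d : An)), hμC c d⟩ : ↥Cmn) * z)})
    -- balancing relations defining `(M ⊗ N) ⊗_{A_m ⊗ A_n} A_{m+n}`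
    (R₂ : Submodule k ((M ⊗[k] N) ⊗[k] Amn))
    (hR₂ : R₂ = Submodule.span k {x | ∃ (m : M) (n : N) (a : Am) (b : An) (z : Amn),
      x = ((MulOpposite.op a • m) ⊗ₜ (MulOpposite.op b • n)) ⊗ₜ z
        - (m ⊗ₜ n) ⊗ₜ (μ (a ⊗ₜ b) * z)})
    (hcomp : R₁ ≤ R₂.comap (LinearMap.lTensor (M ⊗[k] N) Cmn.val.toLinearMap)) :
    -- (a) the multiplicative decomposition `A_m ⊗ A_n = A^{⊗(m+n)}(C_m ⊗ C_n)`
    Function.Bijective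
      ⇑(TensorProduct.lift (((LinearMap.mul k (Am ⊗[k] An)).comp
          (Algebra.TensorProduct.map Tm.val Tn.val).toLinearMap).compl₂
          (Algebra.TensorProduct.map Cm.val Cn.val).toLinearMap)) ∧
    -- (b) the natural morphism between the relative tensor products is an isomorphism
    Function.Bijective
      ⇑(Submodule.mapQ R₁ R₂ (LinearMap.lTensor (M ⊗[k] N) Cmn.val.toLinearMap) hcomp) := by
  have hdecomp := LinearMap.bijective_mulMap_map_map hAm hAn
  refine ⟨hdecomp, ?_⟩
  set ρ := rightActionTensorProduct k Am An M N
  set ιD := Algebra.TensorProduct.map Cm.val Cn.val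
  have hμD : ∀ x, μ (ιD x) ∈ Cmn := fun x =>
    x.induction_on (by simp) hμC fun _ _ h₁ h₂ => by simpa using add_mem h₁ h₂
  set μD := (μ.comp ιD).codRestrict Cmn hμD
  obtain rfl : R₁ = balancingSubmodule (ρ.comp (AlgHom.op ιD)) μD := by
    rw [hR₁, balancingSubmodule_eq_span_of_span_eq_top _ _ (span_tmul_eq_top k M N)
      (span_tmul_eq_top k Cm Cn)]
    congr 1; ext y; constructor
    · rintro ⟨m, n, c, d, z, rfl⟩; exact ⟨_, ⟨m, n, rfl⟩, _, ⟨c, d, rfl⟩, z, rfl⟩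
    · rintro ⟨_, ⟨m, n, rfl⟩, _, ⟨c, d, rfl⟩, z, rfl⟩; exact ⟨m, n, c, d, z, rfl⟩
  obtain rfl : R₂ = balancingSubmodule ρ μ := by
    rw [hR₂, balancingSubmodule_eq_span_of_span_eq_top _ _ (span_tmul_eq_top k M N)
      (span_tmul_eq_top k Am An)]
    congr 1; ext y; constructor
    · rintro ⟨m, n, a, b, z, rfl⟩; exact ⟨_, ⟨m, n, rfl⟩, _, ⟨a, b, rfl⟩, z, rfl⟩
    · rintro ⟨_, ⟨m, n, rfl⟩, _, ⟨a, b, rfl⟩, z, rfl⟩; exact ⟨m, n, a, b, z, rfl⟩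
  have hB : Function.Surjective (LinearMap.mulMap
      (Algebra.TensorProduct.map Tm.val Tn.val).toLinearMap ιD.toLinearMap) := hdecomp.2
  have hE : Function.Bijective (LinearMap.mulMap
      (μ.toLinearMap ∘ₗ (Algebra.TensorProduct.map Tm.val Tn.val).toLinearMap)
      Cmn.val.toLinearMap) := hAmn
  exact bijective_mapQ_lTensor_balancingSubmodule (AlgHom.val_comp_codRestrict _ Cmn hμD).symm
    hB hE hcomp
end

section
/- In the localized cross-product algebra k[x_1^{±1},x_2^{±1}][(x_1−x_2)^{-1}] * S_2 with t the transposition, set a = (q^{-1}−q)·x_2·(x_1−x_2)^{-1} and c̃ = a + (q − a)t. Then (c̃ − q)(c̃ + q^{-1}) = 0 and c̃ x_1 c̃ = x_2. -/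
/-- In the localized cross-product algebra `k[x₁^{±1},x₂^{±1}][(x₁−x₂)⁻¹] * S₂` (equivalently,
in any `k`-algebra containing elements `x₁, x₂, d, t` satisfying its defining relations:
`x₁, x₂, d` pairwise commute, `d = (x₁−x₂)⁻¹`, `t² = 1`, `t x₁ = x₂ t`, `t x₂ = x₁ t` and
`t d = −d t`), putting `a = (q⁻¹−q)·x₂·(x₁−x₂)⁻¹` and `c̃ = a + (q−a)t`, one has
`(c̃−q)(c̃+q⁻¹) = 0` and `c̃ x₁ c̃ = x₂`. -/
theorem localized_cross_product_affine_hecke_operator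
    {k : Type*} [Field k] {A : Type*} [Ring A] [Algebra k A]
    (q : k) (hq : q ≠ 0)
    (x₁ x₂ d t : A)
    (hx : x₁ * x₂ = x₂ * x₁)
    (hdx₁ : d * x₁ = x₁ * d) (hdx₂ : d * x₂ = x₂ * d)
    (hd : d * (x₁ - x₂) = 1) (hd' : (x₁ - x₂) * d = 1)
    (ht : t * t = 1)
    (htx₁ : t * x₁ = x₂ * t) (htx₂ : t * x₂ = x₁ * t)
    (htd : t * d = -d * t) :
    ((algebraMap k A (q⁻¹ - q) * x₂ * d) + (algebraMap k A q - algebraMap k A (q⁻¹ - q) * x₂ * d) * t - algebraMap k A q)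
      * ((algebraMap k A (q⁻¹ - q) * x₂ * d) + (algebraMap k A q - algebraMap k A (q⁻¹ - q) * x₂ * d) * t + algebraMap k A q⁻¹) = 0 ∧
    ((algebraMap k A (q⁻¹ - q) * x₂ * d) + (algebraMap k A q - algebraMap k A (q⁻¹ - q) * x₂ * d) * t) * x₁
      * ((algebraMap k A (q⁻¹ - q) * x₂ * d) + (algebraMap k A q - algebraMap k A (q⁻¹ - q) * x₂ * d) * t) = x₂ := by
  have hx1d : x₁ * d = 1 + x₂ * d := by linear_combination (norm := noncomm_ring) hd'
  have htm : t * (x₂ * d) = -t - (x₂ * d) * t := by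
    linear_combination (norm := noncomm_ring) htx₂ * d + x₁ * htd - hx1d * t
  have hmx₁ : (x₂ * d) * x₁ = x₂ + x₂ * (x₂ * d) := by
    linear_combination (norm := noncomm_ring) x₂ * hdx₁ + x₂ * hx1d
  have hmx₂ : (x₂ * d) * x₂ = x₂ * (x₂ * d) := by
    linear_combination (norm := noncomm_ring) x₂ * hdx₂
  have hgoal : algebraMap k A (q⁻¹ - q) * x₂ * d = (q⁻¹ - q) • (x₂ * d) := by
    rw [Algebra.smul_def, mul_assoc]
  have hQ : algebraMap k A q = q • (1 : A) := Algebra.algebraMap_eq_smul_one q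
  have hQi : algebraMap k A q⁻¹ = q⁻¹ • (1 : A) := Algebra.algebraMap_eq_smul_one q⁻¹
  rw [hgoal, hQ, hQi]
  set m := x₂ * d with hm
  clear_value m
  clear hgoal hQ hQi hx1d hd hd' hdx₁ hdx₂ htd hm
  -- variant rules
  have vtt : ∀ z : A, t * (t * z) = z := fun z => by rw [← mul_assoc, ht, one_mul]
  have vtx₁ : ∀ z : A, t * (x₁ * z) = x₂ * (t * z) := fun z => by
    rw [← mul_assoc, htx₁, mul_assoc]
  have vtx₂ : ∀ z : A, t * (x₂ * z) = x₁ * (t * z) := fun z => by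
    rw [← mul_assoc, htx₂, mul_assoc]
  have vtm : ∀ z : A, t * (m * z) = -(t * z) - m * (t * z) := fun z => by
    rw [← mul_assoc, htm]; noncomm_ring
  have vmx₁ : ∀ z : A, m * (x₁ * z) = x₂ * z + x₂ * (m * z) := fun z => by
    rw [← mul_assoc, hmx₁]; noncomm_ring
  have vmx₂ : ∀ z : A, m * (x₂ * z) = x₂ * (m * z) := fun z => by
    rw [← mul_assoc, hmx₂, mul_assoc]
  have hx' : x₂ * x₁ = x₁ * x₂ := hx.symm
  have vx : ∀ z : A, x₂ * (x₁ * z) = x₁ * (x₂ * z) := fun z => by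
    rw [← mul_assoc, hx', mul_assoc]
  constructor
  · simp only [mul_add, add_mul, mul_sub, sub_mul, smul_mul_assoc, mul_smul_comm, mul_assoc,
      mul_one, one_mul, mul_neg, neg_mul, smul_neg, ht, htx₁, htx₂, htm, hmx₁, hmx₂, hx',
      vtt, vtx₁, vtx₂, vtm, vmx₁, vmx₂, vx]
    match_scalars <;> field_simp <;> ring
  · simp only [mul_add, add_mul, mul_sub, sub_mul, smul_mul_assoc, mul_smul_comm, mul_assoc,
      mul_one, one_mul, mul_neg, neg_mul, smul_neg, ht, htx₁, htx₂, htm, hmx₁, hmx₂, hx',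
      vtt, vtx₁, vtx₂, vtm, vmx₁, vmx₂, vx]
    match_scalars <;> field_simp <;> ring
end

section
/- In the localized cross-product algebra k[x_1,x_2,x_3][Δ^{-1}] * S_3 (where Δ = (x_1−x_2)(x_1−x_3)(x_2−x_3)), define c̃_{12} = a_{12} + (1−a_{12})t_1 and c̃_{23} = a_{23} + (1−a_{23})t_2 where a_{ij} = (x_i−x_j)^{-1} and t_1, t_2 are the simple transpositions. Then c̃_{12} c̃_{23} c̃_{12} = c̃_{23} c̃_{12} c̃_{23}. -/
/-- In the localized cross-product algebra `k[x₁,x₂,x₃][Δ⁻¹] * S₃` with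
`Δ = (x₁−x₂)(x₁−x₃)(x₂−x₃)` (equivalently, in any `k`-algebra containing elements
`x₁,x₂,x₃`, inverses `d₁₂,d₁₃,d₂₃` of the pairwise differences, and simple transpositions
`t₁, t₂` satisfying the defining relations of the cross-product), the elements
`c̃₁₂ = a₁₂ + (1−a₁₂)t₁` and `c̃₂₃ = a₂₃ + (1−a₂₃)t₂` with `a_{ij} = (xᵢ−xⱼ)⁻¹` satisfy the
braid relation `c̃₁₂c̃₂₃c̃₁₂ = c̃₂₃c̃₁₂c̃₂₃`. -/
theorem localized_cross_product_braid_relation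
    {k : Type*} [Field k] {A : Type*} [Ring A] [Algebra k A]
    (x₁ x₂ x₃ d₁₂ d₁₃ d₂₃ t₁ t₂ : A)
    (hcomm : List.Pairwise Commute [x₁, x₂, x₃, d₁₂, d₁₃, d₂₃])
    (h₁₂ : d₁₂ * (x₁ - x₂) = 1) (h₁₃ : d₁₃ * (x₁ - x₃) = 1) (h₂₃ : d₂₃ * (x₂ - x₃) = 1)
    (ht₁ : t₁ * t₁ = 1) (ht₂ : t₂ * t₂ = 1)
    (hbraid : t₁ * t₂ * t₁ = t₂ * t₁ * t₂)
    (ht₁x₁ : t₁ * x₁ = x₂ * t₁) (ht₁x₂ : t₁ * x₂ = x₁ * t₁) (ht₁x₃ : t₁ * x₃ = x₃ * t₁)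
    (ht₂x₁ : t₂ * x₁ = x₁ * t₂) (ht₂x₂ : t₂ * x₂ = x₃ * t₂) (ht₂x₃ : t₂ * x₃ = x₂ * t₂)
    (ht₁d₁₂ : t₁ * d₁₂ = -d₁₂ * t₁) (ht₁d₁₃ : t₁ * d₁₃ = d₂₃ * t₁) (ht₁d₂₃ : t₁ * d₂₃ = d₁₃ * t₁)
    (ht₂d₂₃ : t₂ * d₂₃ = -d₂₃ * t₂) (ht₂d₁₂ : t₂ * d₁₂ = d₁₃ * t₂) (ht₂d₁₃ : t₂ * d₁₃ = d₁₂ * t₂) :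
    (d₁₂ + (1 - d₁₂) * t₁) * (d₂₃ + (1 - d₂₃) * t₂) * (d₁₂ + (1 - d₁₂) * t₁)
      = (d₂₃ + (1 - d₂₃) * t₂) * (d₁₂ + (1 - d₁₂) * t₁) * (d₂₃ + (1 - d₂₃) * t₂) := by
  -- Extract pairwise commutation facts
  simp only [List.pairwise_cons, List.mem_cons, List.not_mem_nil, or_false,
    List.mem_singleton, forall_eq_or_imp, forall_eq, List.Pairwise.nil, and_true] at hcomm
  obtain ⟨⟨c12, c13, c1a, c1b, c1c⟩, ⟨c23, c2a, c2b, c2c⟩, ⟨c3a, c3b, c3c⟩,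
    ⟨cab, cac⟩, cbc, -⟩ := hcomm
  -- The Arnold relation, proved inside the commutative subring generated by the x's and d's
  have key : d₁₂ * d₂₃ = d₁₂ * d₁₃ + d₂₃ * d₁₃ := by
    set s : Set A := {x₁, x₂, x₃, d₁₂, d₁₃, d₂₃} with hs
    have hc : ∀ x ∈ s, ∀ y ∈ s, x * y = y * x := by
      intro x hx y hy
      simp only [hs, Set.mem_insert_iff, Set.mem_singleton_iff] at hx hy
      rcases hx with rfl|rfl|rfl|rfl|rfl|rfl <;> rcases hy with rfl|rfl|rfl|rfl|rfl|rfl <;>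
        first
          | rfl
          | exact c12 | exact c12.symm | exact c13 | exact c13.symm
          | exact c1a | exact c1a.symm | exact c1b | exact c1b.symm | exact c1c | exact c1c.symm
          | exact c23 | exact c23.symm | exact c2a | exact c2a.symm | exact c2b | exact c2b.symm
          | exact c2c | exact c2c.symm | exact c3a | exact c3a.symm | exact c3b | exact c3b.symm
          | exact c3c | exact c3c.symm | exact cab | exact cab.symm | exact cac | exact cac.symm
          | exact cbc | exact cbc.symm
    letI : CommRing (Subring.closure s) := Subring.closureCommRingOfComm hc
    have mem : ∀ z ∈ s, z ∈ Subring.closure s := fun z hz => Subring.subset_closure hz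
    set X₁ : Subring.closure s := ⟨x₁, mem _ (by simp [hs])⟩
    set X₂ : Subring.closure s := ⟨x₂, mem _ (by simp [hs])⟩
    set X₃ : Subring.closure s := ⟨x₃, mem _ (by simp [hs])⟩
    set Da : Subring.closure s := ⟨d₁₂, mem _ (by simp [hs])⟩
    set Dc : Subring.closure s := ⟨d₁₃, mem _ (by simp [hs])⟩
    set Db : Subring.closure s := ⟨d₂₃, mem _ (by simp [hs])⟩
    have H₁₂ : Da * (X₁ - X₂) = 1 := Subtype.ext (by simpa using h₁₂)
    have H₁₃ : Dc * (X₁ - X₃) = 1 := Subtype.ext (by simpa using h₁₃)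
    have H₂₃ : Db * (X₂ - X₃) = 1 := Subtype.ext (by simpa using h₂₃)
    have key' : Da * Db = Da * Dc + Db * Dc := by
      linear_combination (Da*Dc)*H₂₃ + (Db*Dc)*H₁₂ - (Da*Db)*H₁₃
    have := congrArg Subtype.val key'
    simpa using this
  -- Push the transpositions to the right of the coefficients
  have P1 : ∀ y : A, t₁ * (d₁₂ * y) = -(d₁₂ * (t₁ * y)) := by
    intro y; rw [← mul_assoc, ht₁d₁₂]; simp [mul_assoc]
  have P2 : ∀ y : A, t₁ * (d₂₃ * y) = d₁₃ * (t₁ * y) := by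
    intro y; rw [← mul_assoc, ht₁d₂₃, mul_assoc]
  have P3 : ∀ y : A, t₁ * (d₁₃ * y) = d₂₃ * (t₁ * y) := by
    intro y; rw [← mul_assoc, ht₁d₁₃, mul_assoc]
  have Q1 : ∀ y : A, t₂ * (d₂₃ * y) = -(d₂₃ * (t₂ * y)) := by
    intro y; rw [← mul_assoc, ht₂d₂₃]; simp [mul_assoc]
  have Q2 : ∀ y : A, t₂ * (d₁₂ * y) = d₁₃ * (t₂ * y) := by
    intro y; rw [← mul_assoc, ht₂d₁₂, mul_assoc]
  have Q3 : ∀ y : A, t₂ * (d₁₃ * y) = d₁₂ * (t₂ * y) := by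
    intro y; rw [← mul_assoc, ht₂d₁₃, mul_assoc]
  have P1' : t₁ * d₁₂ = -(d₁₂ * t₁) := by rw [ht₁d₁₂]; simp
  have Q1' : t₂ * d₂₃ = -(d₂₃ * t₂) := by rw [ht₂d₂₃]; simp
  have T1 : ∀ y : A, t₁ * (t₁ * y) = y := by intro y; rw [← mul_assoc, ht₁, one_mul]
  have T2 : ∀ y : A, t₂ * (t₂ * y) = y := by intro y; rw [← mul_assoc, ht₂, one_mul]
  have B : ∀ y : A, t₂ * (t₁ * (t₂ * y)) = t₁ * (t₂ * (t₁ * y)) := by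
    intro y; rw [← mul_assoc, ← mul_assoc, ← hbraid, mul_assoc, mul_assoc]
  have Bb : t₂ * (t₁ * t₂) = t₁ * (t₂ * t₁) := by
    rw [← mul_assoc, ← hbraid, mul_assoc]
  have O1 : d₂₃ * d₁₂ = d₁₂ * d₂₃ := cac.symm.eq
  have O1' : ∀ y : A, d₂₃ * (d₁₂ * y) = d₁₂ * (d₂₃ * y) := fun y => by
    rw [← mul_assoc, O1, mul_assoc]
  have O2 : d₁₃ * d₁₂ = d₁₂ * d₁₃ := cab.symm.eq
  have O2' : ∀ y : A, d₁₃ * (d₁₂ * y) = d₁₂ * (d₁₃ * y) := fun y => by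
    rw [← mul_assoc, O2, mul_assoc]
  have O3 : d₁₃ * d₂₃ = d₂₃ * d₁₃ := cbc.eq
  have O3' : ∀ y : A, d₁₃ * (d₂₃ * y) = d₂₃ * (d₁₃ * y) := fun y => by
    rw [← mul_assoc, O3, mul_assoc]
  have K' : ∀ y : A, d₁₂ * (d₂₃ * y) = d₁₂ * (d₁₃ * y) + d₂₃ * (d₁₃ * y) := fun y => by
    rw [← mul_assoc, key, add_mul, mul_assoc, mul_assoc]
  simp only [mul_add, add_mul, mul_sub, sub_mul, one_mul, mul_one, mul_assoc,
    P1, P2, P3, Q1, Q2, Q3, P1', Q1', ht₁d₁₃, ht₁d₂₃, ht₂d₁₂, ht₂d₁₃,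
    T1, T2, ht₁, ht₂, B, Bb,
    O1, O1', O2, O2', O3, O3', key, K', neg_mul, mul_neg, neg_neg, neg_add, sub_eq_add_neg]
  abel
end

section
/- Let C be a braided monoidal category with braiding c, and X an object of C. Define for each object Y the endomorphism x_Y : Y⊗X → Y⊗X as c_{X,Y} ∘ c_{Y,X}, and c̄_Y : Y⊗X⊗X → Y⊗X⊗X as 1_Y ⊗ c_{X,X}. Then c̄_Y ∘ (x_Y ⊗ 1_X) ∘ c̄_Y = 1_Y ⊗ x', where 1_Y ⊗ x' denotes the double braiding of X with Y⊗X in the second X-slot; i.e., the affine braid relation c(x⊗1)c = 1⊗x holds for the functor of right tensoring with X. -/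
/-!
Both hexagon identities split the double braiding of `X` with `Y ⊗ Z` into
`1_Y ⊗ c_{Z,X}`, then the double braiding of `X` with `Y` in the first slot, then
`1_Y ⊗ c_{X,Z}`. For `Z = X` this is exactly `c̄_Y ∘ (x_Y ⊗ 1_X) ∘ c̄_Y`.
-/

open CategoryTheory MonoidalCategory BraidedCategory

theorem braiding_tensor_left_hom_comp_braiding_tensor_right_hom
    {C : Type*} [Category C] [MonoidalCategory C] [BraidedCategory C] (X Y Z : C) :
    (β_ (Y ⊗ Z) X).hom ≫ (β_ X (Y ⊗ Z)).hom =
      ((α_ Y Z X).hom ≫ Y ◁ (β_ Z X).hom ≫ (α_ Y X Z).inv) ≫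
        ((β_ Y X).hom ≫ (β_ X Y).hom) ▷ Z ≫
        ((α_ Y X Z).hom ≫ Y ◁ (β_ X Z).hom ≫ (α_ Y Z X).inv) := by
  rw [braiding_tensor_left_hom, braiding_tensor_right_hom, comp_whiskerRight]
  simp only [Category.assoc, Iso.hom_inv_id_assoc]

/-- Let `C` be a braided monoidal category with braiding `c`, and `X` an object of `C`.
For each object `Y`, let `x_Y : Y⊗X → Y⊗X` be the double braiding `c_{X,Y} ∘ c_{Y,X}`, and let
`c̄_Y : (Y⊗X)⊗X → (Y⊗X)⊗X` be `1_Y ⊗ c_{X,X}` (conjugated by the associator).  Then the affine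
braid relation `c(x⊗1)c = 1⊗x` holds for the functor of right tensoring with `X`:
`c̄_Y ∘ (x_Y ⊗ 1_X) ∘ c̄_Y` equals the double braiding `x_{Y⊗X}` of `X` with `Y⊗X`. -/
theorem right_tensoring_affine_braid_relation
    {C : Type*} [Category C] [MonoidalCategory C] [BraidedCategory C] (X Y : C) :
    (((α_ Y X X).hom ≫ (Y ◁ (β_ X X).hom) ≫ (α_ Y X X).inv) ≫
        (((β_ Y X).hom ≫ (β_ X Y).hom) ▷ X) ≫
        ((α_ Y X X).hom ≫ (Y ◁ (β_ X X).hom) ≫ (α_ Y X X).inv))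
      = (β_ (Y ⊗ X) X).hom ≫ (β_ X (Y ⊗ X)).hom :=
  (braiding_tensor_left_hom_comp_braiding_tensor_right_hom X Y X).symm
end
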